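/- For every integer n ≥ 1, Σ_{k even} T_{2n−1,k} = Σ_{k odd} T_{2n−1,k} + c_{n−1}, where c_{n−1} is the (n−1)-st Catalan number. -/

import Mathlib

/-- The steps of a Dyck path: up `u = (1,1)` and down `d = (1,-1)`. -/
inductive DStep : Type
  | u : DStep
  | d : DStep
deriving DecidableEq

/-- The height change of a step: `+1` for up, `-1` for down. -/
def DStep.val : DStep → ℤ
  | .u => 1
  | .d => -1

/-- A word over `{u, d}` is a Dyck path if all of its prefix sums are nonnegative and its
total sum is `0`. -/
def IsDyck (p : List DStep) : Prop :=
  (∀ q : List DStep, q <+: p → 0 ≤ (q.map DStep.val).sum) ∧ (p.map DStep.val).sum = 0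

/-- The number of occurrences of the factor `udu` in a Dyck path, i.e. the number of
positions at which three consecutive steps of the path are `u`, `d`, `u`. -/
def countUDU (p : List DStep) : ℕ :=
  ((Finset.range p.length).filter
    fun i => (p.drop i).take 3 = [DStep.u, DStep.d, DStep.u]).card

open List DyckStep

namespace UDUAux

/-- Translate Mathlib `DyckStep` to `DStep`. -/
def toS : DyckStep → DStep | U => .u | D => .d
/-- Translate `DStep` to Mathlib `DyckStep`. -/
def toD : DStep → DyckStep | .u => U | .d => D

@[simp] lemma toS_toD (s : DStep) : toS (toD s) = s := by cases s <;> rfl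
@[simp] lemma toD_toS (s : DyckStep) : toD (toS s) = s := by cases s <;> rfl

lemma countUDU_cons (x : DStep) (l : List DStep) :
    countUDU (x :: l) = (if (x :: l).take 3 = [DStep.u, DStep.d, DStep.u] then 1 else 0)
      + countUDU l := by
  rw [countUDU, countUDU, Finset.card_filter, Finset.card_filter, length_cons,
    Finset.sum_range_succ']
  simp only [drop_succ_cons, drop_zero]
  ring

lemma countUDU_nil : countUDU [] = 0 := rfl

lemma countUDU_append_cons_d (q r : List DStep) :
    countUDU (q ++ DStep.d :: r) = countUDU q + countUDU r +
      (if q.getLast? = some DStep.u ∧ r.head? = some DStep.u then 1 else 0) := by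
  induction q with
  | nil =>
    simp only [nil_append, countUDU_cons, countUDU_nil]
    simp
  | cons x q ih =>
    rw [cons_append, countUDU_cons, ih, countUDU_cons (x := x) (l := q)]
    match q with
    | [] =>
      rcases r with _ | ⟨y, r⟩ <;> rcases x <;> simp <;> omega
    | [y] =>
      rcases x <;> rcases y <;> simp <;> omega
    | y :: z :: q =>
      simp only [take, cons_append, getLast?_cons_cons]
      split_ifs <;> simp_all <;> omega

end UDUAux
namespace UDUAux

lemma sum_val_eq (l : List DStep) :
    (l.map DStep.val).sum = (l.count DStep.u : ℤ) - l.count DStep.d := by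
  induction l with
  | nil => simp
  | cons x l ih =>
    rcases x <;> simp [ih, DStep.val, List.count_cons] <;> ring

lemma count_toD_u (l : List DStep) : (l.map toD).count U = l.count DStep.u := by
  induction l with
  | nil => rfl
  | cons x l ih => rcases x <;> simp [ih, List.count_cons, toD]

lemma count_toD_d (l : List DStep) : (l.map toD).count D = l.count DStep.d := by
  induction l with
  | nil => rfl
  | cons x l ih => rcases x <;> simp [ih, List.count_cons, toD]

/-- A Dyck list as a `DyckWord`. -/
def listToWord (l : List DStep) (h : IsDyck l) : DyckWord where
  toList := l.map toD
  count_U_eq_count_D := by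
    have := h.2
    rw [sum_val_eq] at this
    rw [count_toD_u, count_toD_d]; omega
  count_D_le_count_U i := by
    have := h.1 (l.take i) (List.take_prefix i l)
    rw [sum_val_eq] at this
    rw [← List.map_take, count_toD_u, count_toD_d]; omega

@[simp] lemma listToWord_toList (l : List DStep) (h : IsDyck l) :
    (listToWord l h).toList = l.map toD := rfl

lemma isDyck_map_toS (w : DyckWord) : IsDyck (w.toList.map toS) := by
  constructor
  · intro q hq
    rw [List.prefix_iff_eq_take] at hq
    rw [hq, sum_val_eq, ← List.map_take]
    have h1 : ∀ m : List DyckStep, (m.map toS).count DStep.u = m.count U := by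
      intro m; induction m with
      | nil => rfl
      | cons x m ih => rcases x <;> simp [ih, List.count_cons, toS]
    have h2 : ∀ m : List DyckStep, (m.map toS).count DStep.d = m.count D := by
      intro m; induction m with
      | nil => rfl
      | cons x m ih => rcases x <;> simp [ih, List.count_cons, toS]
    rw [h1, h2]
    have := w.count_D_le_count_U (q.length)
    omega
  · rw [sum_val_eq]
    have h1 : ∀ m : List DyckStep, (m.map toS).count DStep.u = m.count U := by
      intro m; induction m with
      | nil => rfl
      | cons x m ih => rcases x <;> simp [ih, List.count_cons, toS]
    have h2 : ∀ m : List DyckStep, (m.map toS).count DStep.d = m.count D := by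
      intro m; induction m with
      | nil => rfl
      | cons x m ih => rcases x <;> simp [ih, List.count_cons, toS]
    rw [h1, h2, w.count_U_eq_count_D]; ring

lemma semilength_eq_iff (w : DyckWord) (m : ℕ) :
    w.semilength = m ↔ w.toList.length = 2 * m := by
  constructor
  · intro h; rw [← w.two_mul_semilength_eq_length, h]
  · intro h
    have := w.two_mul_semilength_eq_length
    omega

/-- The udu-count of a `DyckWord`. -/
def cW (w : DyckWord) : ℕ := countUDU (w.toList.map toS)

end UDUAux
namespace UDUAux

lemma toList_nest_add (q r : DyckWord) :
    (q.nest + r).toList = U :: (q.toList ++ D :: r.toList) := by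
  show ([U] ++ q.toList ++ [D]) ++ r.toList = _
  simp

lemma getLast?_map_toS_ne (q : DyckWord) :
    ¬ ((q.toList.map toS).getLast? = some DStep.u) := by
  intro h
  rcases eq_or_ne q 0 with rfl | hq
  · simp [show (0 : DyckWord).toList = [] from rfl] at h
  · have hne : q.toList ≠ [] := DyckWord.toList_ne_nil.mpr hq
    have hne' : q.toList.map toS ≠ [] := by simpa using hne
    rw [List.getLast?_eq_getLast hne', List.getLast_map] at h
    rw [q.getLast_eq_D hne] at h
    simp [toS] at h

lemma head?_map_toS (r : DyckWord) (h : r ≠ 0) :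
    (r.toList.map toS).head? = some DStep.u := by
  have hne : r.toList ≠ [] := DyckWord.toList_ne_nil.mpr h
  have hne' : r.toList.map toS ≠ [] := by simpa using hne
  rw [List.head?_eq_head hne', List.head_map, r.head_eq_U hne]
  rfl

lemma cW_nest_add (q r : DyckWord) :
    cW (q.nest + r) = cW q + cW r + (if q = 0 ∧ r ≠ 0 then 1 else 0) := by
  rw [cW, toList_nest_add]
  simp only [List.map_cons, List.map_append, List.map_cons]
  rw [show toS U = DStep.u from rfl, show toS D = DStep.d from rfl]
  rw [countUDU_cons, countUDU_append_cons_d]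
  have hb : ¬ ((q.toList.map toS).getLast? = some DStep.u ∧
      (r.toList.map toS).head? = some DStep.u) := fun h => getLast?_map_toS_ne q h.1
  rw [if_neg hb]
  rcases eq_or_ne q 0 with rfl | hq
  · rcases eq_or_ne r 0 with rfl | hr
    · simp [cW, show (0:DyckWord).toList = [] from rfl, countUDU_nil]
    · have hhd := head?_map_toS r hr
      rcases hm : r.toList.map toS with _ | ⟨y, l⟩
      · simp [hm] at hhd
      · rw [hm, List.head?_cons, Option.some_inj] at hhd
        subst hhd
        simp only [hm]
        simp [cW, show (0:DyckWord).toList = [] from rfl, countUDU_nil, hm, hr]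
        omega
  · have hne : q.toList ≠ [] := DyckWord.toList_ne_nil.mpr hq
    have hh : q.toList.head? = some U := by
      rw [List.head?_eq_head hne, q.head_eq_U hne]
    rcases hm : q.toList with _ | ⟨y, l⟩
    · exact absurd hm hne
    · rw [hm, List.head?_cons, Option.some_inj] at hh
      subst hh
      simp only [hm, List.map_cons, List.cons_append, List.take]
      rw [if_neg (by simp [toS])]
      simp [cW, hm, hq]

end UDUAux
namespace UDUAux

noncomputable def dw (m : ℕ) : Finset DyckWord :=
  (Finset.univ : Finset {p : DyckWord // p.semilength = m}).map
    ⟨Subtype.val, Subtype.val_injective⟩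

@[simp] lemma mem_dw {m : ℕ} {w : DyckWord} : w ∈ dw m ↔ w.semilength = m := by
  simp [dw]

lemma dw_zero : dw 0 = {0} := by
  ext w
  simp only [mem_dw, Finset.mem_singleton]
  constructor
  · intro h
    have := w.two_mul_semilength_eq_length
    rw [h] at this
    rw [← DyckWord.toList_eq_nil]
    exact List.length_eq_zero_iff.mp (by omega)
  · rintro rfl; rfl

lemma ne_zero_of_mem_dw {m : ℕ} {w : DyckWord} (hm : m ≠ 0) (h : w ∈ dw m) : w ≠ 0 := by
  rintro rfl
  rw [mem_dw] at h
  exact hm (by simpa using h.symm)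

noncomputable def S (m : ℕ) : ℤ := ∑ w ∈ dw m, (-1 : ℤ) ^ cW w

@[simp] lemma cW_zero : cW 0 = 0 := rfl

lemma S_zero : S 0 = 1 := by
  rw [S, dw_zero]
  simp

/-- The summand in the decomposition. -/
noncomputable def F : ((_ : ℕ) × (DyckWord × DyckWord)) → ℤ :=
  fun x => (-1 : ℤ) ^ cW x.2.1 * (-1) ^ cW x.2.2 * (if x.2.1 = 0 ∧ x.2.2 ≠ 0 then -1 else 1)

set_option maxHeartbeats 1000000 in
lemma S_succ_sigma (m : ℕ) :
    S (m+1) = ∑ x ∈ (Finset.range (m+1)).sigma (fun j => dw j ×ˢ dw (m-j)), F x := by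
  rw [S]
  refine Finset.sum_nbij' (fun w => ⟨w.insidePart.semilength, (w.insidePart, w.outsidePart)⟩)
    (fun x => x.2.1.nest + x.2.2) ?_ ?_ ?_ ?_ ?_
  · intro w hw
    rw [mem_dw] at hw
    have hne : w ≠ 0 := by
      rintro rfl; simp at hw
    have hsl := w.semilength_insidePart_add_semilength_outsidePart_add_one hne
    simp only [Finset.mem_sigma, Finset.mem_range, Finset.mem_product, mem_dw]
    exact ⟨by omega, by simp, by omega⟩
  · rintro ⟨j, q, r⟩ hx
    simp only [Finset.mem_sigma, Finset.mem_range, Finset.mem_product, mem_dw] at hx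
    obtain ⟨hj, hq, hr⟩ := hx
    rw [mem_dw, DyckWord.semilength_add, DyckWord.semilength_nest, hq, hr]
    omega
  · intro w hw
    rw [mem_dw] at hw
    have hne : w ≠ 0 := by rintro rfl; simp at hw
    exact w.nest_insidePart_add_outsidePart hne
  · rintro ⟨j, q, r⟩ hx
    simp only [Finset.mem_sigma, Finset.mem_range, Finset.mem_product, mem_dw] at hx
    obtain ⟨hj, hq, hr⟩ := hx
    have h1 : (q.nest + r).insidePart = q := by
      rw [DyckWord.insidePart_add DyckWord.nest_ne_zero, DyckWord.insidePart_nest]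
    have h2 : (q.nest + r).outsidePart = r := by
      rw [DyckWord.outsidePart_add DyckWord.nest_ne_zero, DyckWord.outsidePart_nest, zero_add]
    simp only [h1, h2, hq]
  · intro w hw
    rw [mem_dw] at hw
    have hne : w ≠ 0 := by rintro rfl; simp at hw
    show _ = F _
    rw [F]
    conv_lhs => rw [← w.nest_insidePart_add_outsidePart hne]
    rw [cW_nest_add, pow_add, pow_add]
    by_cases hc : w.insidePart = 0 ∧ w.outsidePart ≠ 0 <;> simp [hc]

set_option maxHeartbeats 1000000 in
lemma S_succ (m : ℕ) :
    S (m+1) = (∑ i ∈ Finset.range m, S (i+1) * S (m-1-i)) + (if m = 0 then 1 else -S m) := by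
  have key : S (m+1) = ∑ j ∈ Finset.range (m+1), ∑ q ∈ dw j, ∑ r ∈ dw (m-j),
      ((-1 : ℤ) ^ cW q * (-1) ^ cW r * (if q = 0 ∧ r ≠ 0 then -1 else 1)) := by
    rw [S_succ_sigma, Finset.sum_sigma]
    refine Finset.sum_congr rfl fun j _ => ?_
    rw [← Finset.sum_product']
    rfl
  rw [key, Finset.sum_range_succ']
  congr 1
  · refine Finset.sum_congr rfl fun i hi => ?_
    rw [Finset.mem_range] at hi
    have hcong : ∀ q ∈ dw (i+1), ∀ r ∈ dw (m - (i+1)),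
        ((-1 : ℤ) ^ cW q * (-1) ^ cW r * (if q = 0 ∧ r ≠ 0 then -1 else 1))
          = (-1 : ℤ) ^ cW q * (-1) ^ cW r := by
      intro q hq r hr
      rw [if_neg, mul_one]
      rintro ⟨rfl, -⟩
      exact ne_zero_of_mem_dw (Nat.succ_ne_zero i) hq rfl
    rw [Finset.sum_congr rfl fun q hq => Finset.sum_congr rfl fun r hr => hcong q hq r hr]
    rw [← Finset.sum_mul_sum]
    have h2 : m - (i+1) = m - 1 - i := by omega
    rw [h2, S, S]
  · rw [dw_zero, Finset.sum_singleton]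
    rcases Nat.eq_zero_or_pos m with rfl | hm
    · rw [if_pos rfl, Nat.zero_sub, dw_zero, Finset.sum_singleton]
      simp
    · rw [if_neg (by omega), Nat.sub_zero]
      rw [S, ← Finset.sum_neg_distrib]
      refine Finset.sum_congr rfl fun r hr => ?_
      have hr0 : r ≠ 0 := ne_zero_of_mem_dw (by omega) hr
      simp [hr0]

end UDUAux
namespace UDUAux

lemma sum_even_odd (N : ℕ) (f : ℕ → ℤ) :
    ∑ i ∈ Finset.range (2*N), f i
      = ∑ a ∈ Finset.range N, f (2*a) + ∑ a ∈ Finset.range N, f (2*a+1) := by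
  induction N with
  | zero => simp
  | succ k ih =>
    rw [show 2*(k+1) = (2*k+1)+1 by ring, Finset.sum_range_succ, Finset.sum_range_succ,
      Finset.sum_range_succ (n := k), Finset.sum_range_succ (n := k), ih]
    ring

lemma sum_even_odd' (N : ℕ) (f : ℕ → ℤ) :
    ∑ i ∈ Finset.range (2*N+1), f i
      = ∑ a ∈ Finset.range (N+1), f (2*a) + ∑ a ∈ Finset.range N, f (2*a+1) := by
  rw [Finset.sum_range_succ, sum_even_odd, Finset.sum_range_succ (n := N)]
  ring

lemma catalan_range (n : ℕ) :
    (catalan (n+1) : ℤ) = ∑ i ∈ Finset.range (n+1), (catalan i : ℤ) * catalan (n - i) := by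
  rw [catalan_succ]
  push_cast
  rw [Fin.sum_univ_eq_sum_range (fun i => (catalan i : ℤ) * catalan (n - i))]

lemma S_parity (n : ℕ) : S (2*n+1) = catalan n ∧ S (2*n+2) = 0 := by
  induction n using Nat.strong_induction_on with
  | _ n ih =>
    have h1 : S (2*n+1) = catalan n := by
      rcases Nat.eq_zero_or_pos n with rfl | hn
      · rw [show 2*0+1 = 0+1 by ring, S_succ]
        simp
      · obtain ⟨k, rfl⟩ : ∃ k, n = k + 1 := ⟨n - 1, by omega⟩
        rw [S_succ, if_neg (by omega)]
        have hS2n : S (2*(k+1)) = 0 := by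
          have := (ih k (by omega)).2
          rw [show 2*k+2 = 2*(k+1) by ring] at this
          exact this
        rw [hS2n, neg_zero, add_zero, sum_even_odd]
        have he : ∀ a ∈ Finset.range (k+1),
            S (2*a+1) * S (2*(k+1)-1-2*a) = (catalan a : ℤ) * catalan (k - a) := by
          intro a ha
          rw [Finset.mem_range] at ha
          have h1 := (ih a (by omega)).1
          have h2 := (ih (k - a) (by omega)).1
          rw [show 2*(k+1)-1-2*a = 2*(k-a)+1 by omega, h1, h2]
        have ho : ∀ a ∈ Finset.range (k+1),
            S (2*a+1+1) * S (2*(k+1)-1-(2*a+1)) = 0 := by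
          intro a ha
          rw [Finset.mem_range] at ha
          have := (ih a (by omega)).2
          rw [show 2*a+1+1 = 2*a+2 by ring, this, zero_mul]
        rw [Finset.sum_congr rfl he, Finset.sum_congr rfl ho, Finset.sum_const_zero, add_zero,
          catalan_range]
    refine ⟨h1, ?_⟩
    rw [show 2*n+2 = (2*n+1)+1 by ring, S_succ, if_neg (by omega), sum_even_odd']
    have he : ∀ a ∈ Finset.range n,
        S (2*a+1) * S (2*n+1-1-2*a) = 0 := by
      intro a ha
      rw [Finset.mem_range] at ha
      have := (ih (n-a-1) (by omega)).2
      rw [show 2*n+1-1-2*a = 2*(n-a-1)+2 by omega, this, mul_zero]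
    have ho : ∀ a ∈ Finset.range n,
        S (2*a+1+1) * S (2*n+1-1-(2*a+1)) = 0 := by
      intro a ha
      rw [Finset.mem_range] at ha
      have := (ih a (by omega)).2
      rw [show 2*a+1+1 = 2*a+2 by ring, this, zero_mul]
    rw [Finset.sum_range_succ, Finset.sum_congr rfl he, Finset.sum_congr rfl ho]
    rw [show 2*n+1-1-2*n = 0 by omega, S_zero, mul_one, h1]
    simp

end UDUAux
namespace UDUAux

@[simp] lemma map_toS_toD (l : List DStep) : (l.map toD).map toS = l := by
  induction l with
  | nil => rfl
  | cons x l ih => simp [ih]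

@[simp] lemma map_toD_toS (l : List DyckStep) : (l.map toS).map toD = l := by
  induction l with
  | nil => rfl
  | cons x l ih => simp [ih]

lemma ncard_eq (m : ℕ) (P : ℕ → Prop) [DecidablePred P] :
    {p : List DStep | p.length = 2*m ∧ IsDyck p ∧ P (countUDU p)}.ncard
      = ((dw m).filter (fun w => P (cW w))).card := by
  rw [← Nat.card_coe_set_eq, ← Nat.card_eq_finsetCard]
  refine Nat.card_congr ⟨fun x => ⟨listToWord x.1 x.2.2.1, ?_⟩, fun x => ⟨x.1.toList.map toS, ?_⟩,
    ?_, ?_⟩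
  · obtain ⟨l, hl, hd, hp⟩ := x
    rw [Finset.mem_filter, mem_dw, semilength_eq_iff]
    constructor
    · simpa using hl
    · show P (countUDU ((l.map toD).map toS))
      rwa [map_toS_toD]
  · obtain ⟨w, hw⟩ := x
    rw [Finset.mem_filter, mem_dw] at hw
    obtain ⟨hw1, hw2⟩ := hw
    refine ⟨?_, isDyck_map_toS w, hw2⟩
    rw [List.length_map, ← w.two_mul_semilength_eq_length, hw1]
  · rintro ⟨l, hl⟩
    apply Subtype.ext
    exact map_toS_toD l
  · rintro ⟨w, hw⟩
    apply Subtype.ext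
    apply DyckWord.ext
    show (w.toList.map toS).map toD = w.toList
    exact map_toD_toS _

lemma S_eq_sub (m : ℕ) :
    S m = (((dw m).filter (fun w => Even (cW w))).card : ℤ)
        - (((dw m).filter (fun w => Odd (cW w))).card : ℤ) := by
  rw [S, ← Finset.sum_filter_add_sum_filter_not (dw m) (fun w => Even (cW w))]
  congr 1
  · rw [Finset.sum_congr rfl (fun w hw => (Finset.mem_filter.mp hw).2.neg_one_pow)]
    simp
  · rw [show ((dw m).filter (fun w => ¬ Even (cW w))) = ((dw m).filter (fun w => Odd (cW w)))
        from Finset.filter_congr fun w _ => Nat.not_even_iff_odd]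
    rw [Finset.sum_congr rfl (fun w hw => (Finset.mem_filter.mp hw).2.neg_one_pow)]
    simp

end UDUAux


/-- For every integer `n ≥ 1`, the number of Dyck paths of semilength `2n - 1` with an
even number of occurrences of `udu` equals the number with an odd number of occurrences
of `udu` plus the Catalan number `c_{n-1}`. -/
theorem dyck_even_udu_card_eq_odd_udu_card_add_catalan (n : ℕ) (hn : 1 ≤ n) :
    {p : List DStep | p.length = 2 * (2 * n - 1) ∧ IsDyck p ∧ Even (countUDU p)}.ncard =
      {p : List DStep | p.length = 2 * (2 * n - 1) ∧ IsDyck p ∧ Odd (countUDU p)}.ncard +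
        catalan (n - 1) := by

  open UDUAux in
  rw [ncard_eq, ncard_eq]
  have hS := S_eq_sub (2 * n - 1)
  have hval : S (2 * n - 1) = catalan (n - 1) := by
    have := (S_parity (n - 1)).1
    rwa [show 2 * (n-1) + 1 = 2*n - 1 by omega] at this
  rw [hval] at hS
  omega
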